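/- Let (M_S, M_{SS}, M¹_{oS}, M²_{oS}, M¹, M²) be a separator for an instance of Dyck-2 reachability. Then for every valid walk from a vertex u to a vertex v, the entry (M_S)_{u,v} equals 1. -/

import Mathlib

/-- The four-letter alphabet of Dyck-2: two kinds of opening and closing brackets. -/
inductive Sig2 : Type
  | o1 | c1 | o2 | c2
deriving DecidableEq

/-- The Dyck-2 language: the smallest language containing ε and closed under
concatenation and wrapping in either kind of matching brackets. -/
inductive IsDyck : List Sig2 → Prop
  | nil : IsDyck []
  | append {u v : List Sig2} : IsDyck u → IsDyck v → IsDyck (u ++ v)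
  | br1 {u : List Sig2} : IsDyck u → IsDyck (Sig2.o1 :: u ++ [Sig2.c1])
  | br2 {u : List Sig2} : IsDyck u → IsDyck (Sig2.o2 :: u ++ [Sig2.c2])

/-- `IsWalk E u v p` : `p` is a walk from `u` to `v` in the graph with edge set `E`. -/
def IsWalk {V : Type} (E : Set (V × V)) : V → V → List (V × V) → Prop
  | u, v, [] => u = v
  | u, v, e :: p => e ∈ E ∧ e.1 = u ∧ IsWalk E e.2 v p

/-- A walk is valid if its labels form a Dyck-2 word. -/
def IsValidWalk {V : Type} (E : Set (V × V)) (lab : V × V → Sig2) (u v : V)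
    (p : List (V × V)) : Prop :=
  IsWalk E u v p ∧ IsDyck (p.map lab)


/-- The adjacency matrix of the edges labeled `σ`:
entry `(u, v)` is `1` iff `(u,v) ∈ E` and `lab (u,v) = σ`. -/
def adjMat {n : ℕ} (E : Finset (Fin n × Fin n)) (lab : Fin n × Fin n → Sig2)
    (σ : Sig2) : Matrix (Fin n) (Fin n) ℕ :=
  fun u v => if (u, v) ∈ E ∧ lab (u, v) = σ then 1 else 0

/-- `boolM M` replaces every nonzero entry of `M` by `1`. -/
def boolM {m : ℕ} (M : Matrix (Fin m) (Fin m) ℕ) : Matrix (Fin m) (Fin m) ℕ :=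
  fun i j => if M i j = 0 then 0 else 1

/-- Entrywise order on matrices. -/
def MatLE {m : ℕ} (A B : Matrix (Fin m) (Fin m) ℕ) : Prop :=
  ∀ i j, A i j ≤ B i j

/-- A separator for an instance of Dyck-2 reachability: a sextuple of `n × n`
matrices with entries in `{0, 1, …, n²}`, with `M_S` a `0–1` matrix, satisfying
the ten constraints of Eq. (2). -/
structure Separator {n : ℕ} (E : Finset (Fin n × Fin n))
    (lab : Fin n × Fin n → Sig2) (s t : Fin n) where
  MS : Matrix (Fin n) (Fin n) ℕ
  MSS : Matrix (Fin n) (Fin n) ℕ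
  M1oS : Matrix (Fin n) (Fin n) ℕ
  M2oS : Matrix (Fin n) (Fin n) ℕ
  M1 : Matrix (Fin n) (Fin n) ℕ
  M2 : Matrix (Fin n) (Fin n) ℕ
  entries_bounded : ∀ i j, MS i j ≤ n ^ 2 ∧ MSS i j ≤ n ^ 2 ∧ M1oS i j ≤ n ^ 2 ∧
    M2oS i j ≤ n ^ 2 ∧ M1 i j ≤ n ^ 2 ∧ M2 i j ≤ n ^ 2
  MS_bool : ∀ i j, MS i j ≤ 1
  id_le : MatLE 1 MS
  eq_M1oS : adjMat E lab Sig2.o1 * MS = M1oS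
  eq_M2oS : adjMat E lab Sig2.o2 * MS = M2oS
  eq_MSS : MS * MS = MSS
  eq_M1 : M1oS * adjMat E lab Sig2.c1 = M1
  eq_M2 : M2oS * adjMat E lab Sig2.c2 = M2
  bool_MSS : MatLE (boolM MSS) MS
  bool_M1 : MatLE (boolM M1) MS
  bool_M2 : MatLE (boolM M2) MS
  MS_st : MS s t = 0


lemma isWalk_append {V : Type} (E : Set (V × V)) (p q : List (V × V)) :
    ∀ u v, IsWalk E u v (p ++ q) → ∃ w, IsWalk E u w p ∧ IsWalk E w v q := by
  induction p with
  | nil => intro u v h; exact ⟨u, rfl, h⟩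
  | cons e p ih =>
    intro u v h
    obtain ⟨hE, h1, h2⟩ := h
    obtain ⟨w, hw1, hw2⟩ := ih _ _ h2
    exact ⟨w, ⟨hE, h1, hw1⟩, hw2⟩

lemma mul_entry_le {m : ℕ} (A B : Matrix (Fin m) (Fin m) ℕ) (i k j : Fin m) :
    A i k * B k j ≤ (A * B) i j := by
  rw [Matrix.mul_apply]
  exact Finset.single_le_sum (f := fun k => A i k * B k j)
    (fun _ _ => Nat.zero_le _) (Finset.mem_univ k)

theorem separator_MS_aux
    {n : ℕ} (E : Finset (Fin n × Fin n)) (lab : Fin n × Fin n → Sig2)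
    (s t : Fin n) (S : Separator E lab s t)
    (w : List Sig2) (hd : IsDyck w) :
    ∀ (p : List (Fin n × Fin n)) (u v : Fin n), p.map lab = w →
      IsWalk (↑E) u v p → S.MS u v = 1 := by
  have hone : ∀ u v : Fin n, 1 ≤ S.MS u v → S.MS u v = 1 :=
    fun u v h => le_antisymm (S.MS_bool u v) h
  induction hd with
  | nil =>
    intro p u v hmap hw
    cases p with
    | nil => cases hw; exact hone u u (by simpa using S.id_le u u)
    | cons e p => simp at hmap
  | @append w1 w2 _ _ ih1 ih2 =>
    intro p u v hmap hw
    obtain ⟨p1, p2, rfl, h1, h2⟩ := List.map_eq_append_iff.mp hmap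
    obtain ⟨z, hz1, hz2⟩ := isWalk_append _ _ _ _ _ hw
    have m1 := ih1 p1 u z h1 hz1
    have m2 := ih2 p2 z v h2 hz2
    have : 1 ≤ S.MSS u v := by
      rw [← S.eq_MSS]
      calc (1:ℕ) = S.MS u z * S.MS z v := by rw [m1, m2]
      _ ≤ _ := mul_entry_le _ _ _ _ _
    have hb : boolM S.MSS u v = 1 := by simp [boolM]; omega
    exact hone u v (hb ▸ S.bool_MSS u v)
  | @br1 w1 _ ih =>
    intro p u v hmap hw
    cases p with
    | nil => simp at hmap
    | cons e p' =>
      simp only [List.map_cons, List.cons_append, List.cons.injEq] at hmap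
      obtain ⟨hlabe, hmap'⟩ := hmap
      obtain ⟨q, r, rfl, hq, hr⟩ := List.map_eq_append_iff.mp hmap'
      cases r with
      | nil => simp at hr
      | cons f r' =>
        simp only [List.map_cons, List.cons.injEq] at hr
        obtain ⟨hlabf, hr'⟩ := hr
        have : r' = [] := by cases r' <;> simp_all
        subst this
        obtain ⟨hE, he1, hw'⟩ := hw
        obtain ⟨z, hz1, hz2⟩ := isWalk_append _ _ _ _ _ hw'
        obtain ⟨hfE, hf1, hf2⟩ := hz2
        have hv : f.2 = v := hf2
        subst hv; subst hf1
        have mz := ih q e.2 f.1 hq hz1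
        have ha : adjMat E lab Sig2.o1 u e.2 = 1 := by
          rw [← he1]; simp [adjMat, Finset.mem_coe.mp hE, hlabe]
        have hc : adjMat E lab Sig2.c1 f.1 f.2 = 1 := by
          simp [adjMat, Finset.mem_coe.mp hfE, hlabf]
        have : 1 ≤ S.M1 u f.2 := by
          rw [← S.eq_M1, ← S.eq_M1oS]
          calc (1:ℕ) = (adjMat E lab Sig2.o1 u e.2 * S.MS e.2 f.1) * adjMat E lab Sig2.c1 f.1 f.2 := by
                rw [ha, hc, mz]
          _ ≤ (adjMat E lab Sig2.o1 * S.MS) u f.1 * adjMat E lab Sig2.c1 f.1 f.2 :=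
                Nat.mul_le_mul_right _ (mul_entry_le _ _ _ _ _)
          _ ≤ _ := mul_entry_le _ _ _ _ _
        have hb : boolM S.M1 u f.2 = 1 := by simp [boolM]; omega
        exact hone u f.2 (hb ▸ S.bool_M1 u f.2)
  | @br2 w1 _ ih =>
    intro p u v hmap hw
    cases p with
    | nil => simp at hmap
    | cons e p' =>
      simp only [List.map_cons, List.cons_append, List.cons.injEq] at hmap
      obtain ⟨hlabe, hmap'⟩ := hmap
      obtain ⟨q, r, rfl, hq, hr⟩ := List.map_eq_append_iff.mp hmap'
      cases r with
      | nil => simp at hr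
      | cons f r' =>
        simp only [List.map_cons, List.cons.injEq] at hr
        obtain ⟨hlabf, hr'⟩ := hr
        have : r' = [] := by cases r' <;> simp_all
        subst this
        obtain ⟨hE, he1, hw'⟩ := hw
        obtain ⟨z, hz1, hz2⟩ := isWalk_append _ _ _ _ _ hw'
        obtain ⟨hfE, hf1, hf2⟩ := hz2
        have hv : f.2 = v := hf2
        subst hv; subst hf1
        have mz := ih q e.2 f.1 hq hz1
        have ha : adjMat E lab Sig2.o2 u e.2 = 1 := by
          rw [← he1]; simp [adjMat, Finset.mem_coe.mp hE, hlabe]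
        have hc : adjMat E lab Sig2.c2 f.1 f.2 = 1 := by
          simp [adjMat, Finset.mem_coe.mp hfE, hlabf]
        have : 1 ≤ S.M2 u f.2 := by
          rw [← S.eq_M2, ← S.eq_M2oS]
          calc (1:ℕ) = (adjMat E lab Sig2.o2 u e.2 * S.MS e.2 f.1) * adjMat E lab Sig2.c2 f.1 f.2 := by
                rw [ha, hc, mz]
          _ ≤ (adjMat E lab Sig2.o2 * S.MS) u f.1 * adjMat E lab Sig2.c2 f.1 f.2 :=
                Nat.mul_le_mul_right _ (mul_entry_le _ _ _ _ _)
          _ ≤ _ := mul_entry_le _ _ _ _ _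
        have hb : boolM S.M2 u f.2 = 1 := by simp [boolM]; omega
        exact hone u f.2 (hb ▸ S.bool_M2 u f.2)

/-- If `(M_S, …)` is a separator for an instance of Dyck-2 reachability, then for
every valid walk from `u` to `v` the entry `(M_S)_{u,v}` equals `1`. -/
theorem separator_MS_eq_one_of_validWalk
    {n : ℕ} (E : Finset (Fin n × Fin n)) (lab : Fin n × Fin n → Sig2)
    (s t : Fin n) (S : Separator E lab s t)
    (u v : Fin n) (p : List (Fin n × Fin n))
    (hp : IsValidWalk (↑E) lab u v p) :
    S.MS u v = 1 :=
  separator_MS_aux E lab s t S _ hp.2 p u v rfl hp.1
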